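/- Let h be strictly increasing with h(i) ≥ 1 and growth condition, and let n < h(j+1) and b = Π_{i=0}^n P_i. Then b^(h(j+1)+1) < P_{j+2}^(h(j+2)−1); consequently 1/P_{j+2}^(h(j+2)−1) < 1/b^(h(j+1)+1). -/

import Mathlib

/-!
Bertrand's postulate gives `P i ≤ 2 ^ (i + 1)`, so `b ≤ 2 ^ ((n + 1) ^ 2)` and
`b ^ (h (j + 1) + 1) ≤ 2 ^ ((h (j + 1) + 1) ^ 3)` since `n + 1 ≤ h (j + 1) + 1`. The growth condition
at `m = j + 1` makes `h (j + 2)` exponentially larger than `(h (j + 1) + 1) ^ 3`, which leaves room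
for the `- 1` in the exponent.
-/

/-- `P i` is the `i`-th prime number (`P 0 = 2`). -/
noncomputable def P (i : ℕ) : ℕ := Nat.nth Nat.Prime i

open Finset

lemma P_prime (i : ℕ) : (P i).Prime := Nat.prime_nth_prime i

lemma two_le_P (i : ℕ) : 2 ≤ P i := (P_prime i).two_le

lemma P_succ_le_two_mul (k : ℕ) : P (k + 1) ≤ 2 * P k := by
  obtain ⟨q, hq, hkq, hq2⟩ := Nat.exists_prime_lt_and_le_two_mul (P k) (P_prime k).ne_zero
  refine le_trans ?_ hq2
  by_contra! hlt
  exact (Nat.le_nth_of_lt_nth_succ hlt hq).not_gt hkq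

lemma P_le_two_pow (i : ℕ) : P i ≤ 2 ^ (i + 1) := by
  induction i with
  | zero => simp [P, Nat.nth_prime_zero_eq_two]
  | succ k ih =>
    calc P (k + 1) ≤ 2 * P k := P_succ_le_two_mul k
      _ ≤ 2 * 2 ^ (k + 1) := by omega
      _ = 2 ^ (k + 1 + 1) := by ring

lemma prod_range_P_le_two_pow_sq (n : ℕ) : ∏ i ∈ range n, P i ≤ 2 ^ (n ^ 2) :=
  calc ∏ i ∈ range n, P i ≤ ∏ i ∈ range n, 2 ^ (i + 1) := prod_le_prod' fun i _ => P_le_two_pow i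
    _ = 2 ^ ∑ i ∈ range n, (i + 1) := prod_pow_eq_pow_sum _ _ _
    _ ≤ 2 ^ (n ^ 2) := by
      refine Nat.pow_le_pow_right two_pos ?_
      calc ∑ i ∈ range n, (i + 1) ≤ ∑ _i ∈ range n, n :=
            sum_le_sum fun i hi => mem_range.mp hi
        _ = n ^ 2 := by simp [sq]

lemma prod_range_P_pow_le {n k : ℕ} (hnk : n ≤ k) : (∏ i ∈ range n, P i) ^ k ≤ 2 ^ (k ^ 3) :=
  calc (∏ i ∈ range n, P i) ^ k ≤ (2 ^ (k ^ 2)) ^ k :=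
        Nat.pow_le_pow_left ((prod_range_P_le_two_pow_sq n).trans
          (Nat.pow_le_pow_right two_pos (Nat.pow_le_pow_left hnk 2))) k
    _ = 2 ^ (k ^ 3) := by rw [← pow_mul]; ring_nf

lemma cube_lt_sub_one_of_P_pow_lt {m a x : ℕ} (hx : P m ^ (2 * (m + 2) * (a + 1) ^ 3) < x) :
    (a + 1) ^ 3 < x - 1 := by
  set K := (a + 1) ^ 3
  have hK : 1 ≤ K := Nat.one_le_pow _ _ (Nat.succ_pos a)
  have h2K : 2 * K < x :=
    calc 2 * K < 2 ^ (2 * K) := Nat.lt_two_pow_self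
      _ ≤ P m ^ (2 * K) := Nat.pow_le_pow_left (two_le_P m) _
      _ ≤ P m ^ (2 * (m + 2) * K) :=
        Nat.pow_le_pow_right (P_prime m).pos (by nlinarith)
      _ < x := hx
  omega

theorem b_pow_lt_general
    (h : ℕ → ℕ)
    (hgrow : ∀ m, P m ^ (2 * (m + 2) * (h m + 1) ^ 3) < h (m + 1))
    (n j : ℕ) (hn : n < h (j + 1))
    (b : ℕ) (hbdef : b = ∏ i ∈ Finset.range (n + 1), P i) :
    b ^ (h (j + 1) + 1) < P (j + 2) ^ (h (j + 2) - 1) ∧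
      (1 : ℝ) / (P (j + 2) : ℝ) ^ (h (j + 2) - 1) < 1 / (b : ℝ) ^ (h (j + 1) + 1) := by
  have hlt : b ^ (h (j + 1) + 1) < P (j + 2) ^ (h (j + 2) - 1) :=
    calc b ^ (h (j + 1) + 1) ≤ 2 ^ ((h (j + 1) + 1) ^ 3) :=
          hbdef ▸ prod_range_P_pow_le (by omega)
      _ < 2 ^ (h (j + 2) - 1) :=
          Nat.pow_lt_pow_right one_lt_two (cube_lt_sub_one_of_P_pow_lt (hgrow (j + 1)))
      _ ≤ P (j + 2) ^ (h (j + 2) - 1) := Nat.pow_le_pow_left (two_le_P _) _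
  have hb : 0 < b := hbdef ▸ prod_pos fun i _ => (P_prime i).pos
  exact ⟨hlt, one_div_lt_one_div_of_lt (by positivity) (by exact_mod_cast hlt)⟩

/-- If `n < h (j+1)` and `b = Π_{i=0}^n P_i`, then `b^(h(j+1)+1) < P_{j+2}^(h(j+2)-1)`;
consequently `1 / P_{j+2}^(h(j+2)-1) < 1 / b^(h(j+1)+1)`. -/
theorem b_pow_lt
    (h : ℕ → ℕ) (hmono : StrictMono h) (hpos : ∀ i, 1 ≤ h i)
    (hgrow : ∀ m, P m ^ (2 * (m + 2) * (h m + 1) ^ 3) < h (m + 1))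
    (n j : ℕ) (hn : n < h (j + 1))
    (b : ℕ) (hbdef : b = ∏ i ∈ Finset.range (n + 1), P i) :
    b ^ (h (j + 1) + 1) < P (j + 2) ^ (h (j + 2) - 1) ∧
      (1 : ℝ) / (P (j + 2) : ℝ) ^ (h (j + 2) - 1) < 1 / (b : ℝ) ^ (h (j + 1) + 1) :=
  b_pow_lt_general h hgrow n j hn b hbdef
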